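/- arXiv:2006.10410 — 3 statements merged into one kernel-verified Lean document; each statement's English description precedes it below -/
import Mathlib

section
/- For every action a ∈ A, the variance of the baseline-corrected sampled value estimator over the sampled action a' ~ ξ satisfies Var_{a' ~ ξ}[ṽ_{a'}(a)] = (1/ξ(a) − 1) · (v(a) − b(a))². In particular, if the baseline is perfect, i.e. b(a) = v(a) for all a ∈ A, then ṽ_{a'}(a) = v(a) for all a, a' ∈ A and the estimator has zero variance. -/
/-- The baseline-corrected sampled value estimator: given sampled action `a'`,
its estimate of the value of action `a` is `b a + (v a - b a) / ξ a` if `a = a'`,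
and `b a` otherwise. -/
noncomputable def vtilde {A : Type*} [DecidableEq A] (v b ξ : A → ℝ) (a' a : A) : ℝ :=
  if a = a' then b a + (v a - b a) / ξ a else b a

section

variable {A : Type*} [DecidableEq A] (v b ξ : A → ℝ)

theorem vtilde_self (a : A) : vtilde v b ξ a a = b a + (v a - b a) / ξ a :=
  if_pos rfl

theorem vtilde_of_ne {a' a : A} (h : a ≠ a') : vtilde v b ξ a' a = b a :=
  if_neg h

theorem vtilde_eq_of_baseline_eq {a : A} (hb : b a = v a) (a' : A) :
    vtilde v b ξ a' a = v a := by
  unfold vtilde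
  split_ifs <;> simp [hb]

end

theorem Fintype.sum_mul_eq_add_of_forall_ne {A R : Type*} [Fintype A] [DecidableEq A] [CommRing R]
    (w f : A → R) (a : A) (c : R) (hf : ∀ a' ≠ a, f a' = c) :
    ∑ a', w a' * f a' = w a * f a + (∑ a', w a' - w a) * c := by
  rw [← Finset.add_sum_erase _ _ (Finset.mem_univ a), ← Finset.sum_erase_eq_sub (Finset.mem_univ a),
    Finset.sum_mul]
  congr 1
  exact Finset.sum_congr rfl fun a' ha' => by rw [hf a' (Finset.ne_of_mem_erase ha')]

theorem variance_baseline_corrected_estimator_general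
    {A : Type*} [Fintype A] [DecidableEq A]
    (v b ξ : A → ℝ) (hξpos : ∀ a, 0 < ξ a) (hξsum : ∑ a, ξ a = 1) (a : A) :
    (∑ a', ξ a' * (vtilde v b ξ a' a - v a) ^ 2 = (1 / ξ a - 1) * (v a - b a) ^ 2) ∧
    ((∀ a₀, b a₀ = v a₀) →
      (∀ a₀ a', vtilde v b ξ a' a₀ = v a₀) ∧
      ∑ a', ξ a' * (vtilde v b ξ a' a - v a) ^ 2 = 0) := by
  have hvar : ∑ a', ξ a' * (vtilde v b ξ a' a - v a) ^ 2 = (1 / ξ a - 1) * (v a - b a) ^ 2 := by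
    rw [Fintype.sum_mul_eq_add_of_forall_ne ξ _ a ((b a - v a) ^ 2)
      fun a' h => by rw [vtilde_of_ne v b ξ (Ne.symm h)], hξsum, vtilde_self]
    field_simp [(hξpos a).ne']
    ring
  refine ⟨hvar, fun hb => ⟨fun a₀ => vtilde_eq_of_baseline_eq v b ξ (hb a₀), ?_⟩⟩
  rw [hvar, hb, sub_self, zero_pow two_ne_zero, mul_zero]

/-- For every action `a`, the variance of the baseline-corrected sampled value estimator
over the sampled action `a' ~ ξ` is `(1/ξ a − 1)·(v a − b a)²`.  In particular, with a
perfect baseline (`b = v`) the estimator equals `v` identically and has zero variance. -/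
theorem variance_baseline_corrected_estimator
    {A : Type*} [Fintype A] [Nonempty A] [DecidableEq A]
    (v b ξ : A → ℝ) (hξpos : ∀ a, 0 < ξ a) (hξsum : ∑ a, ξ a = 1) (a : A) :
    (∑ a', ξ a' * (vtilde v b ξ a' a - v a) ^ 2 = (1 / ξ a - 1) * (v a - b a) ^ 2) ∧
    ((∀ a₀, b a₀ = v a₀) →
      (∀ a₀ a', vtilde v b ξ a' a₀ = v a₀) ∧
      ∑ a', ξ a' * (vtilde v b ξ a' a - v a) ^ 2 = 0) :=
  variance_baseline_corrected_estimator_general v b ξ hξpos hξsum a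
end

section
/- (Regret-matching induction step) Let R : A → ℝ be a regret vector, u : A → ℝ a utility vector, and define the instantaneous regret r(a) = u(a) − ∑_{a'∈A} π_R(a')·u(a'). Then ∑_{a∈A} max(R(a) + r(a), 0)² ≤ ∑_{a∈A} max(R(a),0)² + ∑_{a∈A} r(a)². -/
/-!
The positive parts `R⁺` of the regrets are proportional to the regret-matching policy, so the
instantaneous regret `r`, which has zero expectation under that policy, is orthogonal to `R⁺`.
Expanding `max (R a + r a) 0 ^ 2 ≤ (max (R a) 0 + r a) ^ 2` and summing, the cross term vanishes.
-/

/-- The regret-matching policy of a regret vector `R`. -/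
noncomputable def rmPolicy {A : Type*} [Fintype A] (R : A → ℝ) (a : A) : ℝ :=
  if 0 < ∑ a', max (R a') 0 then max (R a) 0 / ∑ a', max (R a') 0
  else 1 / (Fintype.card A : ℝ)

lemma max_add_zero_sq_le (x r : ℝ) :
    max (x + r) 0 ^ 2 ≤ max x 0 ^ 2 + 2 * max x 0 * r + r ^ 2 := by
  have hle : max (x + r) 0 ≤ max (max x 0 + r) 0 :=
    max_le_max_right 0 (add_le_add_left (le_max_left x 0) r)
  calc max (x + r) 0 ^ 2 ≤ max (max x 0 + r) 0 ^ 2 := by gcongr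
    _ ≤ (max x 0 + r) ^ 2 := by
      rcases le_total (max x 0 + r) 0 with h | h
      · rw [max_eq_right h, zero_pow two_ne_zero]; exact sq_nonneg _
      · rw [max_eq_left h]
    _ = max x 0 ^ 2 + 2 * max x 0 * r + r ^ 2 := by ring

lemma sum_max_add_zero_sq_le_of_orthogonal {A : Type*} [Fintype A] (x r : A → ℝ)
    (horth : ∑ a, max (x a) 0 * r a = 0) :
    ∑ a, max (x a + r a) 0 ^ 2 ≤ (∑ a, max (x a) 0 ^ 2) + ∑ a, r a ^ 2 :=
  calc ∑ a, max (x a + r a) 0 ^ 2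
      ≤ ∑ a, (max (x a) 0 ^ 2 + 2 * (max (x a) 0 * r a) + r a ^ 2) :=
        Finset.sum_le_sum fun a _ => by linarith [max_add_zero_sq_le (x a) (r a)]
    _ = (∑ a, max (x a) 0 ^ 2) + ∑ a, r a ^ 2 := by
        rw [Finset.sum_add_distrib, Finset.sum_add_distrib, ← Finset.mul_sum, horth]
        ring

lemma sum_max_zero_mul_rmPolicy {A : Type*} [Fintype A] (R : A → ℝ) (a : A) :
    (∑ a', max (R a') 0) * rmPolicy R a = max (R a) 0 := by
  have hnonneg : ∀ b ∈ Finset.univ, 0 ≤ max (R b) 0 := fun b _ => le_max_right _ _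
  by_cases hS : 0 < ∑ a', max (R a') 0
  · rw [rmPolicy, if_pos hS, mul_div_cancel₀ _ hS.ne']
  · have hS0 : ∑ a', max (R a') 0 = 0 := le_antisymm (not_lt.mp hS) (Finset.sum_nonneg hnonneg)
    rw [hS0, zero_mul, (Finset.sum_eq_zero_iff_of_nonneg hnonneg).mp hS0 a (Finset.mem_univ a)]

lemma sum_max_zero_mul_sub_rmPolicy_expectation {A : Type*} [Fintype A] (R u : A → ℝ) :
    ∑ a, max (R a) 0 * (u a - ∑ a', rmPolicy R a' * u a') = 0 := by
  set S := ∑ a', max (R a') 0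
  have hu : ∑ a, max (R a) 0 * u a = S * ∑ a', rmPolicy R a' * u a' := by
    simp only [Finset.mul_sum, ← mul_assoc, S, sum_max_zero_mul_rmPolicy]
  simp only [mul_sub, Finset.sum_sub_distrib, hu, ← Finset.sum_mul, S, sub_self]

theorem rmPolicy_induction_step_general {A : Type*} [Fintype A] (R u : A → ℝ) :
    ∑ a, max (R a + (u a - ∑ a', rmPolicy R a' * u a')) 0 ^ 2 ≤
      (∑ a, max (R a) 0 ^ 2) + ∑ a, (u a - ∑ a', rmPolicy R a' * u a') ^ 2 :=
  sum_max_add_zero_sq_le_of_orthogonal R _ (sum_max_zero_mul_sub_rmPolicy_expectation R u)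

/-- Regret-matching induction step: with instantaneous regret
`r a = u a − ∑_{a'} π_R a' · u a'`, we have
`∑_a max(R a + r a, 0)² ≤ ∑_a max(R a, 0)² + ∑_a (r a)²`. -/
theorem rmPolicy_induction_step {A : Type*} [Fintype A] [Nonempty A] (R u : A → ℝ) :
    ∑ a, max (R a + (u a - ∑ a', rmPolicy R a' * u a')) 0 ^ 2 ≤
      (∑ a, max (R a) 0 ^ 2) + ∑ a, (u a - ∑ a', rmPolicy R a' * u a') ^ 2 :=
  rmPolicy_induction_step_general R u
end

section
/- (Regret-to-Nash folk theorem for matrix games) Let p^1,…,p^T be mixed strategies on A and q^1,…,q^T mixed strategies on B, and set p̄ = (1/T)∑_t p^t and q̄ = (1/T)∑_t q^t. Suppose the players' average regrets satisfy (1/T)·(max_{a∈A} ∑_t u(a, q^t) − ∑_t u(p^t, q^t)) ≤ ε₁ and (1/T)·(∑_t u(p^t, q^t) − min_{b∈B} ∑_t u(p^t, b)) ≤ ε₂. Then max_{a∈A} u(a, q̄) − min_{b∈B} u(p̄, b) ≤ ε₁ + ε₂; in particular, (p̄, q̄) is an (ε₁+ε₂)-Nash equilibrium of the zero-sum game. 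-/
open Finset

theorem Finset.sum_mul_sum_mul_comm {ι κ R : Type*} [CommSemiring R] (s : Finset ι)
    (s' : Finset κ) (c : R) (w : ι → κ → R) (f : κ → R) :
    ∑ k ∈ s', (c * ∑ i ∈ s, w i k) * f k = c * ∑ i ∈ s, ∑ k ∈ s', w i k * f k := by
  simp only [sum_mul, mul_sum, mul_assoc]
  exact sum_comm

theorem regret_to_nash_folk_theorem_general
    {A B : Type*} [Fintype A] [Fintype B]
    (u : A → B → ℝ) (T : ℕ)
    (p : Fin T → A → ℝ) (q : Fin T → B → ℝ)
    (ε₁ ε₂ : ℝ)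
    (hreg1 : ∀ a, (T : ℝ)⁻¹ *
      ((∑ t, ∑ b, q t b * u a b) - ∑ t, ∑ a', ∑ b, p t a' * q t b * u a' b) ≤ ε₁)
    (hreg2 : ∀ b, (T : ℝ)⁻¹ *
      ((∑ t, ∑ a', ∑ b', p t a' * q t b' * u a' b') - ∑ t, ∑ a', p t a' * u a' b) ≤ ε₂) :
    ∀ a b, (∑ b', ((T : ℝ)⁻¹ * ∑ t, q t b') * u a b') -
             (∑ a', ((T : ℝ)⁻¹ * ∑ t, p t a') * u a' b) ≤ ε₁ + ε₂ := by
  intro a b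
  rw [sum_mul_sum_mul_comm, sum_mul_sum_mul_comm]
  -- the realised payoffs `∑ t, u(pᵗ, qᵗ)` cancel when the two regret bounds are added
  linarith [hreg1 a, hreg2 b]

/-- Regret-to-Nash folk theorem for two-player zero-sum matrix games: if the players'
average regrets over `T` iterations are at most `ε₁` and `ε₂` respectively, then the
pair of average strategies `(p̄, q̄)` satisfies
`max_a u(a, q̄) − min_b u(p̄, b) ≤ ε₁ + ε₂`, i.e. it is an `(ε₁+ε₂)`-Nash equilibrium. -/
theorem regret_to_nash_folk_theorem
    {A B : Type*} [Fintype A] [Nonempty A] [Fintype B] [Nonempty B]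
    (u : A → B → ℝ) (T : ℕ) (hT : 0 < T)
    (p : Fin T → A → ℝ) (q : Fin T → B → ℝ)
    (hp0 : ∀ t a, 0 ≤ p t a) (hp1 : ∀ t, ∑ a, p t a = 1)
    (hq0 : ∀ t b, 0 ≤ q t b) (hq1 : ∀ t, ∑ b, q t b = 1)
    (ε₁ ε₂ : ℝ)
    (hreg1 : ∀ a, (T : ℝ)⁻¹ *
      ((∑ t, ∑ b, q t b * u a b) - ∑ t, ∑ a', ∑ b, p t a' * q t b * u a' b) ≤ ε₁)
    (hreg2 : ∀ b, (T : ℝ)⁻¹ *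
      ((∑ t, ∑ a', ∑ b', p t a' * q t b' * u a' b') - ∑ t, ∑ a', p t a' * u a' b) ≤ ε₂) :
    ∀ a b, (∑ b', ((T : ℝ)⁻¹ * ∑ t, q t b') * u a b') -
             (∑ a', ((T : ℝ)⁻¹ * ∑ t, p t a') * u a' b) ≤ ε₁ + ε₂ :=
  regret_to_nash_folk_theorem_general u T p q ε₁ ε₂ hreg1 hreg2
end
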